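/- Let m, d be positive integers. Then there is an equality of finite multisets of integers: {2(j − i) − (m − d) : 1 ≤ i ≤ d, 1 ≤ j ≤ m} = ⋃_{k=1}^{min(m,d)} {n_k − 1, n_k − 3, …, −(n_k − 1)}, where n_k = m + d + 1 − 2k. (Equivalently: the multiset of shifted contents of the d×m rectangular Young diagram, centered at 0, coincides with the union of the symmetric arithmetic strings of step 2 and lengths given by the principal hook lengths of the rectangle; this identifies the central character of the Speh module a(m,d) with the middle element h_{hook((m^d))}.) -/
import Mathlib

private lemma rs' (n : ℕ) :
    Multiset.range (n + 1) = 0 ::ₘ (Multiset.range n).map (· + 1) := by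
  rw [Multiset.range, List.range_succ_eq_map]
  rfl

private lemma reflect {β : Type*} (n : ℕ) (g : ℕ → β) :
    (Multiset.range n).map (fun t => g (n - 1 - t)) = (Multiset.range n).map g := by
  induction n generalizing g with
  | zero => rfl
  | succ n ih =>
    conv_lhs => rw [rs']
    conv_rhs => rw [show Multiset.range (n + 1) = n ::ₘ Multiset.range n from
      Multiset.range_succ n]
    simp only [Multiset.map_cons, Multiset.map_map]
    have h1 : ((fun t => g (n + 1 - 1 - t)) ∘ (· + 1)) = fun t => g (n - 1 - t) := by
      funext t
      show g (n + 1 - 1 - (t + 1)) = g (n - 1 - t)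
      congr 1
      omega
    rw [h1, ih]
    rfl

private lemma mrange_add (a b : ℕ) :
    Multiset.range (a + b) = Multiset.range a + (Multiset.range b).map (a + ·) := by
  rw [Multiset.range, List.range_add]
  rfl

private def S (n : ℕ) : Multiset ℤ :=
  (Multiset.range n).map (fun t : ℕ => (n : ℤ) - 1 - 2 * (t : ℤ))

private lemma Sflip (n : ℕ) :
    S n = (Multiset.range n).map (fun t : ℕ => 2 * (t : ℤ) - ((n : ℤ) - 1)) := by
  unfold S
  rw [← reflect n (fun t : ℕ => 2 * (t : ℤ) - ((n : ℤ) - 1))]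
  refine Multiset.map_congr rfl ?_
  intro t ht
  rw [Multiset.mem_range] at ht
  omega

private lemma hook (M D : ℕ) :
    ((Multiset.range (M + 1)).map (fun j : ℕ => 2 * (j : ℤ) - ((M : ℤ) - (D : ℤ))))
      + (Multiset.range D).map (fun i : ℕ => -2 * ((i : ℤ) + 1) - ((M : ℤ) - (D : ℤ)))
    = S (M + D + 1) := by
  rw [Sflip]
  have hn : M + D + 1 = D + (M + 1) := by omega
  rw [show Multiset.range (M + D + 1) = Multiset.range D
      + (Multiset.range (M + 1)).map (D + ·) from hn ▸ mrange_add D (M + 1)]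
  rw [Multiset.map_add, Multiset.map_map]
  have h1 : (Multiset.range (M + 1)).map
        ((fun t : ℕ => 2 * (t : ℤ) - (((M + D + 1 : ℕ) : ℤ) - 1)) ∘ (D + ·))
      = (Multiset.range (M + 1)).map (fun j : ℕ => 2 * (j : ℤ) - ((M : ℤ) - (D : ℤ))) := by
    refine Multiset.map_congr rfl ?_
    intro j hj
    show 2 * ((D + j : ℕ) : ℤ) - (((M + D + 1 : ℕ) : ℤ) - 1) = 2 * (j : ℤ) - ((M : ℤ) - (D : ℤ))
    push_cast
    ring
  have h2 : (Multiset.range D).map (fun t : ℕ => 2 * (t : ℤ) - (((M + D + 1 : ℕ) : ℤ) - 1))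
      = (Multiset.range D).map (fun i : ℕ => -2 * ((i : ℤ) + 1) - ((M : ℤ) - (D : ℤ))) := by
    rw [← reflect D (fun i : ℕ => -2 * ((i : ℤ) + 1) - ((M : ℤ) - (D : ℤ)))]
    refine Multiset.map_congr rfl ?_
    intro i hi
    rw [Multiset.mem_range] at hi
    omega
  rw [h1, h2, add_comm]

private lemma key (m d : ℕ) :
    (Multiset.range d).bind (fun i : ℕ => (Multiset.range m).map
        (fun j : ℕ => 2 * ((j : ℤ) - (i : ℤ)) - ((m : ℤ) - (d : ℤ))))
      = (Multiset.range (min m d)).bind (fun k : ℕ => S (m + d - 1 - 2 * k)) := by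
  induction d generalizing m with
  | zero => simp
  | succ D ih =>
    cases m with
    | zero => simp
    | succ M =>
      have hRHS : (Multiset.range (min (M + 1) (D + 1))).bind
            (fun k : ℕ => S (M + 1 + (D + 1) - 1 - 2 * k))
          = S (M + D + 1)
            + (Multiset.range (min M D)).bind (fun k : ℕ => S (M + D - 1 - 2 * k)) := by
        rw [show min (M + 1) (D + 1) = min M D + 1 by omega]
        rw [rs' (min M D), Multiset.cons_bind, Multiset.bind_map]
        rw [show M + 1 + (D + 1) - 1 - 2 * 0 = M + D + 1 by omega]
        congr 1
        refine Multiset.bind_congr ?_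
        intro k hk
        congr 1
        omega
      have hLHS : (Multiset.range (D + 1)).bind (fun i : ℕ => (Multiset.range (M + 1)).map
            (fun j : ℕ => 2 * ((j : ℤ) - (i : ℤ)) - (((M + 1 : ℕ) : ℤ) - ((D + 1 : ℕ) : ℤ))))
          = S (M + D + 1)
            + (Multiset.range D).bind (fun i : ℕ => (Multiset.range M).map
                (fun j : ℕ => 2 * ((j : ℤ) - (i : ℤ)) - ((M : ℤ) - (D : ℤ)))) := by
        rw [rs' D, Multiset.cons_bind, Multiset.bind_map, ← hook M D]
        have h0 : (Multiset.range (M + 1)).map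
              (fun j : ℕ => 2 * ((j : ℤ) - ((0 : ℕ) : ℤ)) - (((M + 1 : ℕ) : ℤ) - ((D + 1 : ℕ) : ℤ)))
            = (Multiset.range (M + 1)).map (fun j : ℕ => 2 * (j : ℤ) - ((M : ℤ) - (D : ℤ))) := by
          refine Multiset.map_congr rfl ?_
          intro j hj
          push_cast
          ring
        rw [h0]
        have hbind : (Multiset.range D).bind (fun i : ℕ => (Multiset.range (M + 1)).map
              (fun j : ℕ => 2 * ((j : ℤ) - ((i + 1 : ℕ) : ℤ)) - (((M + 1 : ℕ) : ℤ) - ((D + 1 : ℕ) : ℤ))))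
            = (Multiset.range D).map (fun i : ℕ => -2 * ((i : ℤ) + 1) - ((M : ℤ) - (D : ℤ)))
              + (Multiset.range D).bind (fun i : ℕ => (Multiset.range M).map
                  (fun j : ℕ => 2 * ((j : ℤ) - (i : ℤ)) - ((M : ℤ) - (D : ℤ)))) := by
          rw [← Multiset.bind_singleton (Multiset.range D)
                (fun i : ℕ => -2 * ((i : ℤ) + 1) - ((M : ℤ) - (D : ℤ))), ← Multiset.bind_add]
          refine Multiset.bind_congr ?_
          intro i hi
          rw [rs' M, Multiset.map_cons, Multiset.map_map, Multiset.singleton_add]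
          have hh : 2 * (((0 : ℕ) : ℤ) - ((i + 1 : ℕ) : ℤ)) - (((M + 1 : ℕ) : ℤ) - ((D + 1 : ℕ) : ℤ))
              = -2 * ((i : ℤ) + 1) - ((M : ℤ) - (D : ℤ)) := by push_cast; ring
          rw [hh]
          have ht : (Multiset.range M).map
                ((fun j : ℕ => 2 * ((j : ℤ) - ((i + 1 : ℕ) : ℤ)) - (((M + 1 : ℕ) : ℤ) - ((D + 1 : ℕ) : ℤ))) ∘ (· + 1))
              = (Multiset.range M).map
                (fun j : ℕ => 2 * ((j : ℤ) - (i : ℤ)) - ((M : ℤ) - (D : ℤ))) := by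
            refine Multiset.map_congr rfl ?_
            intro j hj
            show 2 * (((j + 1 : ℕ) : ℤ) - ((i + 1 : ℕ) : ℤ)) - (((M + 1 : ℕ) : ℤ) - ((D + 1 : ℕ) : ℤ))
              = 2 * ((j : ℤ) - (i : ℤ)) - ((M : ℤ) - (D : ℤ))
            push_cast
            ring
          rw [ht]
        rw [hbind]
        abel
      rw [hLHS, hRHS, ih M]
  
private lemma Icc_val (n : ℕ) :
    (Finset.Icc 1 n).val = (Multiset.range n).map (· + 1) := by
  induction n with
  | zero => rfl
  | succ n ih =>
    have h : Finset.Icc 1 (n + 1) = insert (n + 1) (Finset.Icc 1 n) := by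
      ext x; simp; omega
    rw [h, Finset.insert_val_of_notMem (by simp), ih,
      show Multiset.range (n + 1) = n ::ₘ Multiset.range n from Multiset.range_succ n,
      Multiset.map_cons]

private lemma coe_map (s : Multiset ℕ) (g : ℤ → ℤ) :
    Multiset.map g (s >>= fun a => pure ((a : ℤ))) = s.map (fun a : ℕ => g a) := by
  simp [Bind.bind, Pure.pure, Multiset.bind_singleton]

/-- For positive integers `m, d`, the multiset of shifted contents
`{2(j − i) − (m − d) : 1 ≤ i ≤ d, 1 ≤ j ≤ m}` of the `d × m` rectangular Young diagram
coincides with the multiset union, over `1 ≤ k ≤ min m d`, of the symmetric strings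
`{n_k − 1, n_k − 3, …, −(n_k − 1)}` where `n_k = m + d + 1 − 2k` is the `k`-th principal hook
length of the rectangle.  (This identifies the central character of the Speh module `a(m,d)`
with the middle element `h_{hook((m^d))}`.) -/
theorem stmt_5 (m d : ℕ) (hm : 0 < m) (hd : 0 < d) :
    ((Finset.Icc 1 d ×ˢ Finset.Icc 1 m).val.map
        (fun p => 2 * ((p.2 : ℤ) - (p.1 : ℤ)) - ((m : ℤ) - (d : ℤ))))
      = (Finset.Icc 1 (min m d)).val.bind
          (fun k => (Finset.range (m + d + 1 - 2 * k)).val.map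
            (fun t => (((m + d + 1 - 2 * k : ℕ) : ℤ) - 1) - 2 * (t : ℤ))) := by
  rw [Finset.product_val]
  show Multiset.map _ (Multiset.product _ _) = _
  rw [Multiset.product, Multiset.map_bind]
  rw [Icc_val d, Icc_val m, Icc_val (min m d)]
  rw [Multiset.bind_map, Multiset.bind_map]
  have hL : ∀ i : ℕ, Multiset.map
        (fun p : ℕ × ℕ => 2 * ((p.2 : ℤ) - (p.1 : ℤ)) - ((m : ℤ) - (d : ℤ)))
        (((Multiset.range m).map (· + 1)).map (Prod.mk (i + 1)))
      = (Multiset.range m).map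
        (fun j : ℕ => 2 * ((j : ℤ) - (i : ℤ)) - ((m : ℤ) - (d : ℤ))) := by
    intro i
    rw [Multiset.map_map, Multiset.map_map]
    refine Multiset.map_congr rfl ?_
    intro j hj
    show 2 * (((j + 1 : ℕ) : ℤ) - ((i + 1 : ℕ) : ℤ)) - ((m : ℤ) - (d : ℤ))
      = 2 * ((j : ℤ) - (i : ℤ)) - ((m : ℤ) - (d : ℤ))
    push_cast
    ring
  refine Eq.trans (Multiset.bind_congr fun i _ => hL i) (Eq.trans (key m d) ?_)
  refine Multiset.bind_congr ?_
  intro k hk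
  rw [show m + d + 1 - 2 * (k + 1) = m + d - 1 - 2 * k by omega]
  rw [Finset.range_val, coe_map]
  rfl
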